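/- arXiv:2508.14473 — 4 statements merged into one kernel-verified Lean document; each statement's English description precedes it below -/
import Mathlib

section
/- Let (W,S) be a Coxeter system, J ⊆ S, and let v ∈ ᴶW be the minimal-length representative of its coset W_J v. Set K = max{ K ⊆ J : vKv⁻¹ = K }. If w_J ∈ W_J and x, x' ∈ W_K satisfy w_J (v x) w_J⁻¹ = v x', then w_J ∈ W_K. More generally, if w_J(vx)w_J⁻¹ = vx' for some w_J ∈ W_J and x, x' ∈ W_K, then w_J ∈ W_K and x' = σ⁻¹(w_J) x w_J⁻¹ where σ = Ad(v) restricted to W_K. -/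
/-!
Let `Jₙ` be the descending chain `J₀ = s(J)`, `Jₙ₊₁ = {t ∈ Jₙ | v⁻¹ t v ∈ W_{Jₙ}}` and
`T = ⋂ₙ Jₙ`. If `t` is a left descent of `u ∈ W_{Jₙ}` and `v⁻¹ u v ∈ W_{Jₙ}`, then, `v` being
minimal in `W_{Jₙ} v`, `v⁻¹ t v` is a left inversion of `v⁻¹ u v`, hence lies in `W_{Jₙ}`.
Since `v⁻¹ w_J v = x' w_J x⁻¹` with `x, x' ∈ W_K` and `K ⊆ Jₙ` for all `n`, induction along a
reduced word gives `w_J ∈ W_{Jₙ}` for every `n`, so `w_J ∈ W_T`: a reduced word of an element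
of a standard parabolic subgroup only uses its generators.

By construction `v⁻¹ W_T v ⊆ W_T`. For the minimal element `d` of `W_T v W_T`, conjugation by
`d⁻¹` maps `T` injectively into `T` and fixes every generator outside the finite support of
`d`, so it permutes `T`. Hence `v W_T v⁻¹ = W_T`, then `v` is minimal on both sides and
`v T v⁻¹ = T`, and maximality of `K` gives `T ⊆ K`.

Inversions of arbitrary reflections are controlled through the parity cocycle `η(w, t)` coming
from Tits' permutation representation of `W` on `W × ℤ/2`, which yields the strong exchange
property.
-/

variable {B W : Type*} [Group W] {M : CoxeterMatrix B}

theorem mul_mul_inv_eq_iff_eq_inv_mul_mul {G : Type*} [Group G] (g x y : G) :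
    g * x * g⁻¹ = y ↔ x = g⁻¹ * y * g := by
  rw [mul_inv_eq_iff_eq_mul, ← eq_inv_mul_iff_mul_eq, mul_assoc]

theorem Set.MapsTo.surjOn_of_injOn_of_finite {α : Type*} {f : α → α} {S : Set α}
    (hmaps : Set.MapsTo f S S) (hinj : Set.InjOn f S) (hfin : {x ∈ S | f x ≠ x}.Finite) :
    Set.SurjOn f S S := by
  have hF : Set.MapsTo f {x ∈ S | f x ≠ x} {x ∈ S | f x ≠ x} := fun x hx =>
    ⟨hmaps hx.1, fun hfx => hx.2 (hinj (hmaps hx.1) hx.1 hfx)⟩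
  have hbij := (hfin.injOn_iff_bijOn_of_mapsTo hF).1 (hinj.mono (Set.sep_subset _ _))
  intro x hx
  by_cases hfx : f x = x
  · exact ⟨x, hx, hfx⟩
  · obtain ⟨y, hy, rfl⟩ := hbij.surjOn ⟨hx, hfx⟩
    exact ⟨y, hy.1, rfl⟩

section ConjRestrict

open Subgroup

variable {G : Type*} [Group G] {S T : Set G} {g v : G}

theorem Subgroup.conj_mem_closure_of_forall (h : ∀ t ∈ S, g * t * g⁻¹ ∈ closure T) {x : G}
    (hx : x ∈ closure S) : g * x * g⁻¹ ∈ closure T := by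
  have : closure S ≤ (closure T).comap (MulAut.conj g).toMonoidHom :=
    (closure_le _).2 fun t ht => by simpa using h t ht
  simpa using this hx

def conjRestrict (v : G) (S : Set G) : Set G :=
  {t ∈ S | v⁻¹ * t * v ∈ closure S}

theorem iterate_conjRestrict_subset (n : ℕ) : (conjRestrict v)^[n] S ⊆ S := by
  induction n with
  | zero => exact subset_rfl
  | succ n ih =>
    rw [Function.iterate_succ_apply']
    exact (Set.sep_subset _ _).trans ih

theorem subset_iterate_conjRestrict {K : Set G} (hKS : K ⊆ S) (hK : ∀ t ∈ K, v⁻¹ * t * v ∈ K)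
    (n : ℕ) : K ⊆ (conjRestrict v)^[n] S := by
  induction n with
  | zero => exact hKS
  | succ n ih =>
    rw [Function.iterate_succ_apply']
    exact fun t ht => ⟨ih ht, subset_closure (ih (hK t ht))⟩

end ConjRestrict

namespace CoxeterSystem

variable (cs : CoxeterSystem M W)

local prefix:100 "π " => cs.wordProd
local prefix:100 "ℓ " => cs.length

section TitsRepresentation

open scoped Classical

theorem simple_mul_mul_simple_eq_simple_iff (i : B) (t : W) :
    cs.simple i * t * cs.simple i = cs.simple i ↔ t = cs.simple i := by
  simpa [cs.inv_simple] using mul_mul_inv_eq_iff_eq_inv_mul_mul (cs.simple i) t (cs.simple i)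

noncomputable def titsPerm (i : B) : Equiv.Perm (W × ZMod 2) :=
  Function.Involutive.toPerm
    (fun p => (cs.simple i * p.1 * cs.simple i, p.2 + if p.1 = cs.simple i then 1 else 0))
    (by
      rintro ⟨t, ε⟩
      simp only [simple_mul_mul_simple_eq_simple_iff, add_assoc, CharTwo.add_self_eq_zero,
        add_zero, Prod.mk.injEq, and_true]
      simp [mul_assoc])

theorem titsPerm_apply (i : B) (p : W × ZMod 2) :
    cs.titsPerm i p =
      (cs.simple i * p.1 * cs.simple i, p.2 + if p.1 = cs.simple i then 1 else 0) :=
  rfl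

theorem titsPerm_mul_pow_apply (i j : B) (n : ℕ) (t : W) (ε : ZMod 2) :
    ((cs.titsPerm i * cs.titsPerm j) ^ n) (t, ε) =
      ((cs.simple i * cs.simple j) ^ n * t * ((cs.simple i * cs.simple j) ^ n)⁻¹,
        ε + ∑ k ∈ Finset.range (2 * n),
          if t = (cs.simple j * cs.simple i) ^ k * cs.simple j then 1 else 0) := by
  set u := cs.simple i * cs.simple j
  set r := cs.simple j * cs.simple i
  have hur : u⁻¹ = r := by simp [u, r, cs.inv_simple]
  have hsemi : ∀ n : ℕ, cs.simple j * u ^ n = r ^ n * cs.simple j := fun n =>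
    SemiconjBy.pow_right (by simp [SemiconjBy, u, r, mul_assoc]) n
  induction n with
  | zero => simp
  | succ n ih =>
    have hconj := mul_mul_inv_eq_iff_eq_inv_mul_mul (u ^ n) t
    have h₁ : u ^ n * t * (u ^ n)⁻¹ = cs.simple j ↔ t = r ^ (2 * n) * cs.simple j := by
      rw [hconj, mul_assoc, hsemi, ← inv_pow, hur, two_mul, pow_add, mul_assoc]
    have h₂ : cs.simple j * (u ^ n * t * (u ^ n)⁻¹) * cs.simple j = cs.simple i ↔
        t = r ^ (2 * n + 1) * cs.simple j := by
      have := mul_mul_inv_eq_iff_eq_inv_mul_mul (cs.simple j) (u ^ n * t * (u ^ n)⁻¹)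
        (cs.simple i)
      rw [cs.inv_simple] at this
      have h₃ : cs.simple j * cs.simple i * cs.simple j * u ^ n = r ^ (n + 1) * cs.simple j := by
        rw [mul_assoc, hsemi, ← mul_assoc, pow_succ']
      rw [this, hconj, ← inv_pow, hur, mul_assoc, h₃, ← mul_assoc, ← pow_add,
        show n + (n + 1) = 2 * n + 1 by ring]
    rw [pow_succ', Equiv.Perm.mul_apply, ih, Equiv.Perm.mul_apply, titsPerm_apply,
      titsPerm_apply]
    simp only [h₁, h₂, Prod.mk.injEq]
    constructor
    · simp only [pow_succ', mul_inv_rev, u, mul_assoc, cs.inv_simple]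
    · rw [show 2 * (n + 1) = 2 * n + 1 + 1 by ring, Finset.sum_range_succ,
        Finset.sum_range_succ]
      ring

theorem isLiftable_titsPerm : M.IsLiftable cs.titsPerm := by
  intro i j
  ext ⟨t, ε⟩ : 1
  have hper : ∀ k, (cs.simple j * cs.simple i) ^ (M i j + k) = (cs.simple j * cs.simple i) ^ k :=
    fun k => by rw [pow_add, cs.simple_mul_simple_pow', one_mul]
  -- every reflection `(s_j s_i)^k s_j`, `k < M i j`, is counted twice
  rw [titsPerm_mul_pow_apply, cs.simple_mul_simple_pow, two_mul, Finset.sum_range_add]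
  simp only [hper, CharTwo.add_self_eq_zero]
  simp

noncomputable def titsRep : W →* Equiv.Perm (W × ZMod 2) :=
  cs.lift ⟨cs.titsPerm, cs.isLiftable_titsPerm⟩

theorem titsRep_simple (i : B) : cs.titsRep (cs.simple i) = cs.titsPerm i :=
  cs.lift_apply_simple _ i

theorem titsRep_apply (w : W) :
    ∀ p : W × ZMod 2, cs.titsRep w p = (w * p.1 * w⁻¹, p.2 + (cs.titsRep w (p.1, 0)).2) := by
  induction w using cs.simple_induction_left with
  | one => simp
  | mul_simple_left w i ih =>
    rintro ⟨t, ε⟩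
    rw [map_mul, Equiv.Perm.mul_apply, Equiv.Perm.mul_apply, ih (t, ε), ih (t, 0),
      titsRep_simple, titsPerm_apply, titsPerm_apply]
    simp only [mul_inv_rev, cs.inv_simple, zero_add, add_assoc, mul_assoc]

end TitsRepresentation

/-- `η(w, t)`: the parity of the number of occurrences of `t` in the left inversion sequence
of any word for `w`. -/
noncomputable def reflectionCocycle (w t : W) : ZMod 2 :=
  (cs.titsRep w⁻¹ (t, 0)).2

local notation "η" => cs.reflectionCocycle

theorem reflectionCocycle_mul (a b t : W) : η (a * b) t = η a t + η b (a⁻¹ * t * a) := by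
  rw [reflectionCocycle, mul_inv_rev, map_mul, Equiv.Perm.mul_apply, cs.titsRep_apply a⁻¹,
    cs.titsRep_apply b⁻¹]
  simp [reflectionCocycle]

theorem reflectionCocycle_one (t : W) : η 1 t = 0 := by
  simp [reflectionCocycle]

open scoped Classical in
theorem reflectionCocycle_simple (i : B) (t : W) :
    η (cs.simple i) t = if t = cs.simple i then 1 else 0 := by
  simp [reflectionCocycle, titsRep, cs.inv_simple, cs.lift_apply_simple, titsPerm_apply]

theorem reflectionCocycle_inv (w t : W) : η w⁻¹ t = η w (w * t * w⁻¹) := by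
  have := cs.reflectionCocycle_mul w w⁻¹ (w * t * w⁻¹)
  rw [mul_inv_cancel, reflectionCocycle_one, eq_comm, CharTwo.add_eq_zero] at this
  simpa [mul_assoc] using this.symm

theorem reflectionCocycle_self {t : W} (ht : cs.IsReflection t) : η t t = 1 := by
  obtain ⟨w, i, rfl⟩ := ht
  -- for `t = w s w⁻¹`: `η(t, t) = η(w, t) + η(s, s) + η(w⁻¹, s)` and `η(w⁻¹, s) = η(w, t)`
  rw [reflectionCocycle_mul, reflectionCocycle_mul, reflectionCocycle_inv,
    reflectionCocycle_simple]
  simp only [mul_inv_rev, cs.inv_simple, mul_assoc, inv_mul_cancel_left, inv_mul_cancel,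
    mul_one, cs.simple_mul_simple_cancel_left, if_true]
  generalize η w _ = a
  revert a
  decide

theorem exists_eraseIdx_of_reflectionCocycle_eq_one (ω : List B) {t : W}
    (h : η (π ω) t = 1) :
    ∃ j < ω.length, t * π ω = π (ω.eraseIdx j) := by
  induction ω generalizing t with
  | nil => simp [reflectionCocycle_one] at h
  | cons i ω ih =>
    by_cases hti : t = cs.simple i
    · subst hti
      exact ⟨0, by simp, by simp [cs.wordProd_cons, ← mul_assoc]⟩
    · rw [cs.wordProd_cons, reflectionCocycle_mul, reflectionCocycle_simple, if_neg hti, zero_add,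
        cs.inv_simple] at h
      obtain ⟨j, hj, heq⟩ := ih h
      refine ⟨j + 1, by simpa using hj, ?_⟩
      rw [List.eraseIdx_cons_succ, cs.wordProd_cons, cs.wordProd_cons, ← heq]
      simp [mul_assoc]

theorem length_mul_lt_of_reflectionCocycle_eq_one {w t : W} (h : η w t = 1) :
    ℓ (t * w) < ℓ w := by
  obtain ⟨ω, hω, rfl⟩ := cs.exists_isReduced w
  obtain ⟨j, hj, heq⟩ := cs.exists_eraseIdx_of_reflectionCocycle_eq_one ω h
  calc ℓ (t * π ω) ≤ (ω.eraseIdx j).length := heq ▸ cs.length_wordProd_le _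
    _ < ω.length := by rw [List.length_eraseIdx_of_lt hj]; omega
    _ = ℓ (π ω) := hω.symm

theorem isLeftInversion_iff_reflectionCocycle_eq_one {t : W} (ht : cs.IsReflection t) (w : W) :
    cs.IsLeftInversion w t ↔ η w t = 1 := by
  refine ⟨fun h => ?_, fun h => ⟨ht, cs.length_mul_lt_of_reflectionCocycle_eq_one h⟩⟩
  by_contra hne
  -- otherwise `η(w, t) = 0`, and then `η(t * w, t) = η(t, t) = 1`
  have h₀ : η (t * w) t = 1 := by
    rw [reflectionCocycle_mul, cs.reflectionCocycle_self ht, inv_mul_cancel, one_mul]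
    revert hne
    generalize η w t = a
    revert a
    decide
  have := cs.length_mul_lt_of_reflectionCocycle_eq_one h₀
  rw [← mul_assoc, ht.mul_self, one_mul] at this
  exact absurd h.2 (by omega)

theorem exists_eraseIdx_of_isLeftInversion {ω : List B} {t : W}
    (h : cs.IsLeftInversion (π ω) t) : ∃ j < ω.length, t * π ω = π (ω.eraseIdx j) :=
  cs.exists_eraseIdx_of_reflectionCocycle_eq_one ω
    ((cs.isLeftInversion_iff_reflectionCocycle_eq_one h.1 _).1 h)

theorem isLeftInversion_conj_of_isLeftInversion_mul {a b t : W}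
    (h : cs.IsLeftInversion (a * b) t) (ha : ¬cs.IsLeftInversion a t) :
    cs.IsLeftInversion b (a⁻¹ * t * a) := by
  have ht : cs.IsReflection t := h.1
  have ht' : cs.IsReflection (a⁻¹ * t * a) := by simpa using ht.conj a⁻¹
  rw [cs.isLeftInversion_iff_reflectionCocycle_eq_one ht, reflectionCocycle_mul] at h
  rw [cs.isLeftInversion_iff_reflectionCocycle_eq_one ht] at ha
  rw [cs.isLeftInversion_iff_reflectionCocycle_eq_one ht']
  revert h ha
  generalize η a t = x
  generalize η b _ = y
  revert x y
  decide

theorem exists_isReduced_mem_wordProd_eq (ω : List B) :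
    ∃ ω' : List B, cs.IsReduced ω' ∧ (∀ i ∈ ω', i ∈ ω) ∧ π ω' = π ω := by
  induction ω with
  | nil => exact ⟨[], by simp [IsReduced], by simp, rfl⟩
  | cons i ω ih =>
    obtain ⟨ω', hred, hmem, heq⟩ := ih
    rw [cs.wordProd_cons, ← heq]
    rcases cs.length_simple_mul (π ω') i with hup | hdown
    · refine ⟨i :: ω', ?_, ?_, cs.wordProd_cons _ _⟩
      · rw [IsReduced, cs.wordProd_cons, hup, hred, List.length_cons]
      · simpa using fun j hj => Or.inr (hmem j hj)
    · obtain ⟨j, hj, hexch⟩ := cs.exists_eraseIdx_of_isLeftInversion (ω := ω')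
        (t := cs.simple i) ⟨cs.isReflection_simple i, by omega⟩
      refine ⟨ω'.eraseIdx j, ?_, fun k hk => ?_, hexch.symm⟩
      · rw [IsReduced, ← hexch, List.length_eraseIdx_of_lt hj]
        rw [IsReduced] at hred
        omega
      · exact List.mem_cons_of_mem _ (hmem k (List.mem_of_mem_eraseIdx hk))

section Parabolic

open Subgroup

variable {S : Set W}

theorem wordProd_mem_closure {ω : List B} (hω : ∀ i ∈ ω, cs.simple i ∈ S) :
    π ω ∈ closure S :=
  list_prod_mem (by simpa using fun i hi => subset_closure (hω i hi))

theorem exists_wordProd_eq_of_mem_closure (hS : S ⊆ Set.range cs.simple) {w : W}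
    (hw : w ∈ closure S) : ∃ ω : List B, (∀ i ∈ ω, cs.simple i ∈ S) ∧ π ω = w := by
  induction hw using closure_induction with
  | mem x hx =>
    obtain ⟨i, rfl⟩ := hS hx
    exact ⟨[i], by simpa using hx, by simp⟩
  | one => exact ⟨[], by simp, by simp⟩
  | mul x y _ _ ihx ihy =>
    obtain ⟨ω₁, h₁, rfl⟩ := ihx
    obtain ⟨ω₂, h₂, rfl⟩ := ihy
    exact ⟨ω₁ ++ ω₂, by simpa [or_imp, forall_and] using ⟨h₁, h₂⟩, cs.wordProd_append _ _⟩
  | inv x _ ih =>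
    obtain ⟨ω, hω, rfl⟩ := ih
    exact ⟨ω.reverse, by simpa using hω, by simp⟩

theorem exists_isReduced_of_mem_closure (hS : S ⊆ Set.range cs.simple) {w : W}
    (hw : w ∈ closure S) :
    ∃ ω : List B, cs.IsReduced ω ∧ (∀ i ∈ ω, cs.simple i ∈ S) ∧ π ω = w := by
  obtain ⟨ω, hω, rfl⟩ := cs.exists_wordProd_eq_of_mem_closure hS hw
  obtain ⟨ω', hred, hmem, heq⟩ := cs.exists_isReduced_mem_wordProd_eq ω
  exact ⟨ω', hred, fun i hi => hω i (hmem i hi), heq⟩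

theorem mem_closure_of_isLeftInversion (hS : S ⊆ Set.range cs.simple) {w t : W}
    (hw : w ∈ closure S) (h : cs.IsLeftInversion w t) : t ∈ closure S := by
  obtain ⟨ω, hω, rfl⟩ := cs.exists_wordProd_eq_of_mem_closure hS hw
  obtain ⟨j, -, hj⟩ := cs.exists_eraseIdx_of_isLeftInversion h
  rw [← mul_inv_cancel_right t (π ω), hj]
  exact mul_mem (cs.wordProd_mem_closure fun i hi => hω i (List.mem_of_mem_eraseIdx hi))
    (inv_mem (cs.wordProd_mem_closure hω))

theorem mem_of_mem_closure_of_length_eq_one (hS : S ⊆ Set.range cs.simple) {w : W}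
    (hw : w ∈ closure S) (h : ℓ w = 1) : w ∈ S := by
  obtain ⟨ω, hred, hω, rfl⟩ := cs.exists_isReduced_of_mem_closure hS hw
  obtain ⟨i, rfl⟩ := List.length_eq_one_iff.1 (hred.symm.trans h)
  simpa using hω i (by simp)

theorem simple_mem_of_isReduced (hS : S ⊆ Set.range cs.simple) {ω : List B}
    (hred : cs.IsReduced ω) (hω : π ω ∈ closure S) : ∀ i ∈ ω, cs.simple i ∈ S := by
  induction ω with
  | nil => simp
  | cons i ω ih =>
    have hi : cs.simple i ∈ S := cs.mem_of_mem_closure_of_length_eq_one hS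
      (cs.mem_closure_of_isLeftInversion hS hω
        (cs.isLeftInversion_of_mem_leftInvSeq hred List.mem_cons_self))
      (cs.length_simple i)
    have htail : π ω ∈ closure S := by
      simpa [cs.wordProd_cons] using mul_mem (subset_closure hi) hω
    simpa [hi] using ih (by simpa using hred.drop 1) htail

theorem mem_closure_iInter {ι : Type*} {S : ι → Set W} (hS : ∀ n, S n ⊆ Set.range cs.simple)
    {w : W} (hw : ∀ n, w ∈ closure (S n)) : w ∈ closure (⋂ n, S n) := by
  obtain ⟨ω, hred, rfl⟩ := cs.exists_isReduced w
  exact cs.wordProd_mem_closure fun i hi =>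
    Set.mem_iInter.2 fun n => cs.simple_mem_of_isReduced (hS n) hred (hw n) i hi

theorem simple_eq_of_simple_mul_wordProd_eq {i j : B} {ω : List B}
    (hred : cs.IsReduced (i :: ω)) (h : cs.simple i * π ω = π ω * cs.simple j)
    (hi : cs.simple i ∉ cs.simple '' {k | k ∈ ω}) :
    cs.simple i = cs.simple j := by
  have hmem : π (i :: ω) ∈ closure (cs.simple '' {k | k ∈ ω ++ [j]}) := by
    rw [cs.wordProd_cons, h, ← cs.wordProd_singleton j, ← cs.wordProd_append]
    exact cs.wordProd_mem_closure fun k hk => ⟨k, hk, rfl⟩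
  obtain ⟨k, hk, hki⟩ :=
    cs.simple_mem_of_isReduced (Set.image_subset_range _ _) hred hmem i (by simp)
  rcases List.mem_append.1 hk with hk | hk
  · exact absurd ⟨k, hk, hki⟩ hi
  · rw [← hki, List.mem_singleton.1 hk]

end Parabolic

section Minimal

open Subgroup

variable {S : Set W} {d v : W}

/-- For `S = s(J)` this says `d ∈ ᴶW`. -/
def IsLeftMinimal (S : Set W) (d : W) : Prop :=
  ∀ y ∈ closure S, ℓ d ≤ ℓ (y * d)

def IsRightMinimal (S : Set W) (d : W) : Prop :=
  ∀ y ∈ closure S, ℓ d ≤ ℓ (d * y)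

variable {cs}

theorem isLeftMinimal_inv_iff : cs.IsLeftMinimal S d⁻¹ ↔ cs.IsRightMinimal S d := by
  have key : ∀ y, ℓ (y⁻¹ * d⁻¹) = ℓ (d * y) := fun y => by
    rw [← mul_inv_rev, cs.length_inv]
  refine ⟨fun h y hy => ?_, fun h y hy => ?_⟩
  · simpa [cs.length_inv, key] using h y⁻¹ (inv_mem hy)
  · simpa [cs.length_inv, ← key y⁻¹] using h y⁻¹ (inv_mem hy)

theorem IsLeftMinimal.mono {S' : Set W} (hd : cs.IsLeftMinimal S d) (h : S' ⊆ S) :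
    cs.IsLeftMinimal S' d :=
  fun y hy => hd y (closure_mono h hy)

theorem IsLeftMinimal.length_mul (hS : S ⊆ Set.range cs.simple) (hd : cs.IsLeftMinimal S d)
    {y : W} (hy : y ∈ closure S) : ℓ (y * d) = ℓ y + ℓ d := by
  obtain ⟨ω, hred, hω, rfl⟩ := cs.exists_isReduced_of_mem_closure hS hy
  rw [hred.eq]
  clear hy
  induction ω with
  | nil => simp
  | cons i ω ih =>
    have hred' : cs.IsReduced ω := by simpa using hred.drop 1
    have hω' : ∀ k ∈ ω, cs.simple k ∈ S := fun k hk => hω k (List.mem_cons_of_mem _ hk)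
    have hnot : ¬cs.IsLeftInversion (π ω) (cs.simple i) := fun h => by
      have := h.2
      rw [← cs.wordProd_cons, hred.eq, hred'.eq, List.length_cons] at this
      omega
    rcases cs.length_simple_mul (π ω * d) i with hup | hdown
    · rw [cs.wordProd_cons, mul_assoc, hup, ih hred' hω', List.length_cons]
      ring
    · have hinv := cs.isLeftInversion_conj_of_isLeftInversion_mul (b := d)
        ⟨cs.isReflection_simple i, by omega⟩ hnot
      have hq : (π ω)⁻¹ * cs.simple i * π ω ∈ closure S :=
        mul_mem (mul_mem (inv_mem (cs.wordProd_mem_closure hω'))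
          (subset_closure (hω i List.mem_cons_self))) (cs.wordProd_mem_closure hω')
      exact absurd (hd _ hq) (not_le.2 hinv.2)

theorem IsRightMinimal.length_mul (hS : S ⊆ Set.range cs.simple) (hd : cs.IsRightMinimal S d)
    {y : W} (hy : y ∈ closure S) : ℓ (d * y) = ℓ d + ℓ y := by
  have := (isLeftMinimal_inv_iff.2 hd).length_mul hS (inv_mem hy)
  rwa [← mul_inv_rev, cs.length_inv, cs.length_inv, cs.length_inv, add_comm] at this

theorem exists_mul_isLeftMinimal_isRightMinimal (hS : S ⊆ Set.range cs.simple)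
    (hv : cs.IsLeftMinimal S v) :
    ∃ c ∈ closure S, cs.IsLeftMinimal S (v * c) ∧ cs.IsRightMinimal S (v * c) := by
  obtain ⟨_, ⟨c, hc, rfl⟩, hmin⟩ := wellFounded_lt.has_min
    ((fun c => ℓ (v * c)) '' (closure S : Set W)) ⟨_, 1, one_mem _, rfl⟩
  have hR : cs.IsRightMinimal S (v * c) := fun y hy => by
    rw [mul_assoc]
    exact not_lt.1 (hmin _ ⟨c * y, mul_mem hc hy, rfl⟩)
  refine ⟨c, hc, fun y hy => ?_, hR⟩
  have h₁ := hv.length_mul hS hy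
  have h₂ := hR.length_mul hS (inv_mem hc)
  have h₃ := cs.length_mul_le (y * v * c) c⁻¹
  simp only [mul_inv_cancel_right, cs.length_inv] at h₂ h₃
  rw [← mul_assoc]
  -- `ℓ (y v c) ≥ ℓ (y v) - ℓ c = ℓ y + ℓ v - ℓ c = ℓ y + ℓ (v c)`
  omega

theorem conj_mem_of_isLeftMinimal_of_isRightMinimal (hS : S ⊆ Set.range cs.simple)
    (hL : cs.IsLeftMinimal S d) (hR : cs.IsRightMinimal S d) {t : W} (ht : t ∈ S)
    (hr : d⁻¹ * t * d ∈ closure S) : d⁻¹ * t * d ∈ S := by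
  refine cs.mem_of_mem_closure_of_length_eq_one hS hr ?_
  have h₁ := hR.length_mul hS hr
  have h₂ := hL.length_mul hS (subset_closure ht)
  obtain ⟨i, rfl⟩ := hS ht
  simp only [← mul_assoc, mul_inv_cancel, one_mul, cs.length_simple] at h₁ h₂
  omega

theorem IsLeftMinimal.conj_mem_closure_of_isLeftInversion (hS : S ⊆ Set.range cs.simple)
    (hv : cs.IsLeftMinimal S v) {u t : W} (hu : u ∈ closure S) (hvu : v⁻¹ * u * v ∈ closure S)
    (h : cs.IsLeftInversion u t) : v⁻¹ * t * v ∈ closure S := by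
  have ht := cs.mem_closure_of_isLeftInversion hS hu h
  have huv : cs.IsLeftInversion (v * (v⁻¹ * u * v)) t := by
    refine ⟨h.1, ?_⟩
    rw [show v * (v⁻¹ * u * v) = u * v by group, ← mul_assoc,
      hv.length_mul hS (mul_mem ht hu), hv.length_mul hS hu]
    have := h.2
    omega
  have hnot : ¬cs.IsLeftInversion v t := fun h' => by
    have := h'.2
    rw [hv.length_mul hS ht] at this
    omega
  exact cs.mem_closure_of_isLeftInversion hS hvu
    (cs.isLeftInversion_conj_of_isLeftInversion_mul huv hnot)

theorem IsLeftMinimal.mem_closure_conjRestrict (hS : S ⊆ Set.range cs.simple)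
    (hv : cs.IsLeftMinimal S v) {u : W} (hu : u ∈ closure S) (hvu : v⁻¹ * u * v ∈ closure S) :
    u ∈ closure (conjRestrict v S) := by
  obtain ⟨ω, hred, hω, rfl⟩ := cs.exists_isReduced_of_mem_closure hS hu
  induction ω with
  | nil => simp
  | cons i ω ih =>
    have hω' : ∀ k ∈ ω, cs.simple k ∈ S := fun k hk => hω k (List.mem_cons_of_mem _ hk)
    have hi : cs.simple i ∈ conjRestrict v S :=
      ⟨hω i List.mem_cons_self, hv.conj_mem_closure_of_isLeftInversion hS hu hvu
        (cs.isLeftInversion_of_mem_leftInvSeq hred List.mem_cons_self)⟩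
    have hvω : v⁻¹ * π ω * v ∈ closure S := by
      have := mul_mem hi.2 hvu
      rwa [cs.wordProd_cons, show v⁻¹ * cs.simple i * v * (v⁻¹ * (cs.simple i * π ω) * v) =
        v⁻¹ * π ω * v by simp [mul_assoc, cs.simple_mul_simple_cancel_left]] at this
    rw [cs.wordProd_cons]
    exact mul_mem (subset_closure hi)
      (ih (by simpa using hred.drop 1) hω' (cs.wordProd_mem_closure hω') hvω)

theorem IsLeftMinimal.mem_closure_iInter_iterate_conjRestrict (hS : S ⊆ Set.range cs.simple)
    (hv : cs.IsLeftMinimal S v) {K : Set W} (hKS : K ⊆ S) (hK : ∀ t ∈ K, v⁻¹ * t * v ∈ K)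
    {u : W} (hu : u ∈ closure S) (hvu : v⁻¹ * u * v ∈ closure (insert u K)) :
    u ∈ closure (⋂ n, (conjRestrict v)^[n] S) := by
  refine cs.mem_closure_iInter (fun n => (iterate_conjRestrict_subset n).trans hS) fun n => ?_
  induction n with
  | zero => exact hu
  | succ n ih =>
    rw [Function.iterate_succ_apply']
    refine (hv.mono (iterate_conjRestrict_subset n)).mem_closure_conjRestrict
      ((iterate_conjRestrict_subset n).trans hS) ih ((closure_le _).2 ?_ hvu)
    exact Set.insert_subset ih ((subset_iterate_conjRestrict hKS hK n).trans subset_closure)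

theorem conj_mem_closure_iInter_iterate_conjRestrict (hS : S ⊆ Set.range cs.simple) {g : W}
    (hg : g ∈ closure (⋂ n, (conjRestrict v)^[n] S)) :
    v⁻¹ * g * v ∈ closure (⋂ n, (conjRestrict v)^[n] S) := by
  refine cs.mem_closure_iInter (fun n => (iterate_conjRestrict_subset n).trans hS) fun n => ?_
  have hg' : g ∈ closure ((conjRestrict v)^[n + 1] S) :=
    closure_mono (Set.iInter_subset (fun n => (conjRestrict v)^[n] S) (n + 1)) hg
  rw [Function.iterate_succ_apply'] at hg'
  simpa using conj_mem_closure_of_forall (g := v⁻¹) (fun t ht => by simpa using ht.2) hg'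

theorem image_conj_eq_of_isLeftMinimal_of_isRightMinimal (hS : S ⊆ Set.range cs.simple)
    (hL : cs.IsLeftMinimal S d) (hR : cs.IsRightMinimal S d)
    (hconj : ∀ t ∈ S, d⁻¹ * t * d ∈ closure S) : (fun t => d⁻¹ * t * d) '' S = S := by
  have hmaps : Set.MapsTo (fun t => d⁻¹ * t * d) S S := fun t ht =>
    conj_mem_of_isLeftMinimal_of_isRightMinimal hS hL hR ht (hconj t ht)
  obtain ⟨ω, hred, hω⟩ := cs.exists_isReduced d
  have hfix : {t ∈ S | d⁻¹ * t * d ≠ t} ⊆ cs.simple '' {k | k ∈ ω} := by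
    rintro t ⟨ht, hne⟩
    by_contra hnot
    obtain ⟨i, rfl⟩ := hS ht
    obtain ⟨j, hj⟩ := hS (hmaps ht)
    refine hne (hj.symm.trans (cs.simple_eq_of_simple_mul_wordProd_eq ?_ ?_ hnot).symm)
    · rw [IsReduced, cs.wordProd_cons, ← hω, hL.length_mul hS (subset_closure ht),
        cs.length_simple, hω, hred.eq, List.length_cons, add_comm]
    · rw [← hω, hj]
      group
  exact hmaps.image_subset.antisymm <| hmaps.surjOn_of_injOn_of_finite
    (fun a _ b _ hab => by simpa using hab) (((List.finite_toSet ω).image _).subset hfix)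

theorem IsLeftMinimal.image_conj_eq (hS : S ⊆ Set.range cs.simple) (hv : cs.IsLeftMinimal S v)
    (hconj : ∀ g ∈ closure S, v⁻¹ * g * v ∈ closure S) :
    (fun g => v * g * v⁻¹) '' S = S := by
  obtain ⟨c, hc, hdL, hdR⟩ := exists_mul_isLeftMinimal_isRightMinimal hS hv
  have hd := image_conj_eq_of_isLeftMinimal_of_isRightMinimal hS hdL hdR fun t ht => by
    rw [show (v * c)⁻¹ * t * (v * c) = c⁻¹ * (v⁻¹ * t * v) * c by group]
    exact mul_mem (mul_mem (inv_mem hc) (hconj t (subset_closure ht))) hc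
  have hvS : ∀ g ∈ closure S, v * g * v⁻¹ ∈ closure S := fun g hg => by
    rw [show v * g * v⁻¹ = v * c * (c⁻¹ * g * c) * (v * c)⁻¹ by group]
    refine conj_mem_closure_of_forall (fun t ht => subset_closure ?_)
      (mul_mem (mul_mem (inv_mem hc) hg) hc)
    rw [← hd] at ht
    obtain ⟨t', ht', rfl⟩ := ht
    simpa [mul_assoc] using ht'
  have hvR : cs.IsRightMinimal S v := fun y hy => by
    simpa using hv _ (hvS y hy)
  ext t
  constructor
  · rintro ⟨t₀, ht₀, rfl⟩
    simpa using conj_mem_of_isLeftMinimal_of_isRightMinimal hS (isLeftMinimal_inv_iff.2 hvR)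
      (isLeftMinimal_inv_iff.1 (by rwa [inv_inv])) ht₀
      (by simpa using hvS t₀ (subset_closure ht₀))
  · intro ht
    exact ⟨v⁻¹ * t * v, conj_mem_of_isLeftMinimal_of_isRightMinimal hS hv hvR ht
      (hconj t (subset_closure ht)), by group⟩

end Minimal

end CoxeterSystem

/-- with `v ∈ ᴶW` and `K` the largest subset of `J` with `v K v⁻¹ = K`,
if `w_J (v x) w_J⁻¹ = v x'` with `w_J ∈ W_J` and `x, x' ∈ W_K`, then `w_J ∈ W_K` and
`x' = σ⁻¹(w_J) x w_J⁻¹` where `σ = Ad(v)`. -/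
theorem stmt4 (cs : CoxeterSystem M W) (J : Set B) (v : W)
    -- `v` is the minimal length representative of its coset `W_J v`
    (hv : ∀ y ∈ Subgroup.closure (cs.simple '' J), cs.length v ≤ cs.length (y * v))
    (K : Set B) (hKJ : K ⊆ J)
    -- `v K v⁻¹ = K` (as sets of simple reflections)
    (hK : (fun g => v * g * v⁻¹) '' (cs.simple '' K) = cs.simple '' K)
    -- `K` is the largest such subset of `J`
    (hKmax : ∀ K' ⊆ J, (fun g => v * g * v⁻¹) '' (cs.simple '' K') = cs.simple '' K' → K' ⊆ K)
    (wJ x x' : W)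
    (hwJ : wJ ∈ Subgroup.closure (cs.simple '' J))
    (hx : x ∈ Subgroup.closure (cs.simple '' K))
    (hx' : x' ∈ Subgroup.closure (cs.simple '' K))
    (h : wJ * (v * x) * wJ⁻¹ = v * x') :
    wJ ∈ Subgroup.closure (cs.simple '' K) ∧ x' = (v⁻¹ * wJ * v) * x * wJ⁻¹ := by
  have hformula : x' = (v⁻¹ * wJ * v) * x * wJ⁻¹ := by
    rw [← inv_mul_cancel_left v x', ← h]
    group
  refine ⟨?_, hformula⟩
  have hJ : cs.simple '' J ⊆ Set.range cs.simple := Set.image_subset_range _ _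
  have hvJ : cs.IsLeftMinimal (cs.simple '' J) v := hv
  have hKv : ∀ t ∈ cs.simple '' K, v⁻¹ * t * v ∈ cs.simple '' K := by
    rintro t ht
    rw [← hK] at ht
    obtain ⟨t₀, ht₀, rfl⟩ := ht
    simpa [mul_assoc] using ht₀
  have hvwJ : v⁻¹ * wJ * v ∈ Subgroup.closure (insert wJ (cs.simple '' K)) := by
    rw [show v⁻¹ * wJ * v = x' * wJ * x⁻¹ by rw [hformula]; group]
    have hKsub := Subgroup.closure_mono (Set.subset_insert wJ (cs.simple '' K))
    exact mul_mem (mul_mem (hKsub hx') (Subgroup.subset_closure (Set.mem_insert _ _)))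
      (inv_mem (hKsub hx))
  set T := ⋂ n, (conjRestrict v)^[n] (cs.simple '' J)
  have hTJ : T ⊆ cs.simple '' J := Set.iInter_subset _ 0
  have hwT : wJ ∈ Subgroup.closure T :=
    hvJ.mem_closure_iInter_iterate_conjRestrict hJ (Set.image_mono hKJ) hKv hwJ hvwJ
  have hTv : (fun g => v * g * v⁻¹) '' T = T := (hvJ.mono hTJ).image_conj_eq (hTJ.trans hJ)
    fun _ => CoxeterSystem.conj_mem_closure_iInter_iterate_conjRestrict hJ
  have hT : cs.simple '' (J ∩ cs.simple ⁻¹' T) = T := by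
    rw [Set.image_inter_preimage, Set.inter_eq_right.2 hTJ]
  have hTK := hKmax _ Set.inter_subset_left (by rw [hT, hTv])
  exact Subgroup.closure_mono (hT ▸ Set.image_mono hTK) hwT
end

section
/- Let (W,S) be a Coxeter system, J ⊆ S spherical, and let w be the unique maximal length element in a double coset D = W_J w W_J. Let u = w₁ w w₂ with w₁, w₂ ∈ W_J (so ℓ(u) = ℓ(w) − ℓ(w₁) − ℓ(w₂)), and let v = w w₂ w₁. Then ℓ(u) ≤ ℓ(v), with equality if and only if ℓ(w₂ w₁) = ℓ(w₂) + ℓ(w₁). Consequently, if 𝒪_J denotes the W_J-conjugacy class of u (and of v), then u has maximal length in 𝒪_J if and only if v has maximal length in 𝒪_J and ℓ(w₂w₁) = ℓ(w₂) + ℓ(w₁). -/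
/-!
If `w` is longest in `w W_J`, then every reflection of `W_J` is a right inversion of `w`.
Lifting the action `(t, ε) ↦ (s t s, ±ε)` of the simple reflections on `W × ℤˣ` to `W` gives the
reflection cocycle `η(x, t) = ±1`, equal to `-1` exactly when `t` is a right inversion of `x`, with
`η(xy, t) = η(y, t) η(x, y t y⁻¹)`. For `c ∈ W_J`, `s ∈ J` with `ℓ(cs) > ℓ(c)` the reflection
`c s c⁻¹ ∈ W_J` then forces `ℓ(wcs) < ℓ(wc)`, and induction along `W_J` gives
`ℓ(wa) = ℓ(w) - ℓ(a)` for all `a ∈ W_J`. Hence `ℓ(v) = ℓ(w) - ℓ(w₂w₁) ≥ ℓ(w) - ℓ(w₂) - ℓ(w₁)`,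
which is `ℓ(u)`, and the rest follows because `v = w₁⁻¹ u w₁` is `W_J`-conjugate to `u`.
-/

variable {B W : Type*} [Group W] {M : CoxeterMatrix B}

namespace CoxeterSystem

open List

variable (cs : CoxeterSystem M W)

local prefix:100 "s" => cs.simple
local prefix:100 "π" => cs.wordProd
local prefix:100 "ℓ" => cs.length
local prefix:100 "ris" => cs.rightInvSeq

theorem alternatingWord_two_mul_succ (i j : B) (k : ℕ) :
    alternatingWord i j (2 * (k + 1)) = i :: j :: alternatingWord i j (2 * k) := by
  rw [show 2 * (k + 1) = 2 * k + 1 + 1 by ring, alternatingWord_succ', alternatingWord_succ']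
  simp

theorem simple_mul_pow_eq_inv_pow_mul_simple (i j : B) (k : ℕ) :
    s j * (s i * s j) ^ k = ((s i * s j) ^ k)⁻¹ * s j := by
  rw [← inv_pow, mul_inv_rev, inv_simple, inv_simple]
  exact SemiconjBy.pow_right (by simp [SemiconjBy, mul_assoc]) k

theorem rightInvSeq_alternatingWord_two_mul (i j : B) (k : ℕ) :
    ris (alternatingWord i j (2 * k)) =
      ((range (2 * k)).map fun n => s j * (s i * s j) ^ n).reverse := by
  induction k with
  | zero => simp [alternatingWord]
  | succ k ih =>
    have hprod : π (alternatingWord i j (2 * k)) = (s i * s j) ^ k := by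
      simp [prod_alternatingWord_eq_mul_pow]
    rw [alternatingWord_two_mul_succ, rightInvSeq, rightInvSeq, ih, wordProd_cons, hprod,
      show 2 * (k + 1) = 2 * k + 1 + 1 by ring, range_succ, range_succ]
    simp only [map_append, map_cons, map_nil, reverse_append, reverse_cons, reverse_nil,
      nil_append, cons_append]
    have h := cs.simple_mul_pow_eq_inv_pow_mul_simple i j k
    set c := s i * s j
    simp only [cons.injEq, and_true]
    constructor
    · calc (s j * c ^ k)⁻¹ * s i * (s j * c ^ k) = (c ^ k)⁻¹ * s j * c * c ^ k := by
            simp [c, mul_assoc]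
        _ = s j * c ^ (2 * k + 1) := by rw [← h, two_mul, pow_succ, pow_add]; group
    · rw [← h, mul_assoc, ← pow_add, two_mul]

theorem even_count_rightInvSeq_alternatingWord_two_mul [DecidableEq W] (i j : B) (t : W) :
    Even ((ris (alternatingWord i j (2 * M i j))).count t) := by
  rw [rightInvSeq_alternatingWord_two_mul, count_reverse, two_mul, range_add, map_append,
    map_map, count_append]
  have : ((fun n => s j * (s i * s j) ^ n) ∘ (M i j + ·)) = fun n => s j * (s i * s j) ^ n := by
    funext n; simp [pow_add, simple_mul_simple_pow]
  rw [this]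
  exact ⟨_, rfl⟩

section InversionSign

variable [DecidableEq W]

def signAction (i : B) : Function.End (W × ℤˣ) :=
  fun p => (s i * p.1 * s i, if p.1 = s i then -p.2 else p.2)

theorem prod_map_signAction_apply (ω : List B) (t : W) (ε : ℤˣ) :
    (ω.map cs.signAction).prod (t, ε) = (π ω * t * (π ω)⁻¹, ε * (-1) ^ (ris ω).count t) := by
  induction ω with
  | nil =>
    simp only [map_nil, prod_nil, wordProd_nil, one_mul, inv_one, mul_one, rightInvSeq_nil,
      count_nil, pow_zero]
    rfl
  | cons i ω ih =>
    change cs.signAction i ((ω.map cs.signAction).prod (t, ε)) = _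
    rw [ih, signAction, wordProd_cons, rightInvSeq, count_cons]
    have hconj : π ω * t * (π ω)⁻¹ = s i ↔ (π ω)⁻¹ * s i * π ω = t := by
      constructor
      · intro h; rw [← h]; group
      · rintro rfl; group
    simp only [hconj, beq_iff_eq]
    split_ifs <;> simp [pow_succ, mul_assoc]

theorem prod_map_signAction_alternatingWord (i j : B) (k : ℕ) :
    ((alternatingWord i j (2 * k)).map cs.signAction).prod =
      (cs.signAction i * cs.signAction j) ^ k := by
  induction k with
  | zero => simp [alternatingWord]
  | succ k ih => rw [alternatingWord_two_mul_succ, map_cons, map_cons, prod_cons, prod_cons, ih,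
      pow_succ', mul_assoc]

theorem isLiftable_signAction : M.IsLiftable cs.signAction := by
  intro i j
  rw [← prod_map_signAction_alternatingWord]
  funext ⟨t, ε⟩
  have hprod : π (alternatingWord i j (2 * M i j)) = 1 := by
    simp [prod_alternatingWord_eq_mul_pow, simple_mul_simple_pow]
  rw [prod_map_signAction_apply, hprod,
    (cs.even_count_rightInvSeq_alternatingWord_two_mul i j t).neg_one_pow]
  simp only [one_mul, inv_one, mul_one]
  rfl

def signRep : W →* Function.End (W × ℤˣ) :=
  cs.lift ⟨cs.signAction, cs.isLiftable_signAction⟩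

theorem signRep_wordProd (ω : List B) : cs.signRep (π ω) = (ω.map cs.signAction).prod := by
  rw [wordProd, map_list_prod, map_map]
  congr 2
  funext i
  exact cs.lift_apply_simple cs.isLiftable_signAction i

def inversionSign (x t : W) : ℤˣ := (cs.signRep x (t, 1)).2

theorem inversionSign_wordProd (ω : List B) (t : W) :
    cs.inversionSign (π ω) t = (-1) ^ (ris ω).count t := by
  simp [inversionSign, signRep_wordProd, prod_map_signAction_apply]

theorem signRep_apply (x t : W) (ε : ℤˣ) :
    cs.signRep x (t, ε) = (x * t * x⁻¹, ε * cs.inversionSign x t) := by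
  obtain ⟨ω, rfl⟩ := cs.wordProd_surjective x
  simp [inversionSign_wordProd, signRep_wordProd, prod_map_signAction_apply]

theorem inversionSign_mul (x y t : W) :
    cs.inversionSign (x * y) t = cs.inversionSign y t * cs.inversionSign x (y * t * y⁻¹) := by
  have h : cs.signRep (x * y) (t, 1) = cs.signRep x (cs.signRep y (t, 1)) := by
    rw [map_mul]; rfl
  rw [signRep_apply, signRep_apply, signRep_apply] at h
  simpa using congrArg Prod.snd h

theorem inversionSign_one (t : W) : cs.inversionSign 1 t = 1 := by
  simpa using cs.inversionSign_wordProd [] t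

theorem inversionSign_simple_self (i : B) : cs.inversionSign (s i) (s i) = -1 := by
  simpa using cs.inversionSign_wordProd [i] (s i)

theorem IsReflection.inversionSign_self {t : W} (ht : cs.IsReflection t) :
    cs.inversionSign t t = -1 := by
  obtain ⟨g, i, rfl⟩ := ht
  have hcancel : cs.inversionSign g⁻¹ (g * s i * g⁻¹) * cs.inversionSign g (s i) = 1 := by
    have h := cs.inversionSign_mul g g⁻¹ (g * s i * g⁻¹)
    rwa [mul_inv_cancel, inversionSign_one, show g⁻¹ * (g * s i * g⁻¹) * g⁻¹⁻¹ = s i by group,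
      eq_comm] at h
  rw [inversionSign_mul, show g⁻¹ * (g * s i * g⁻¹) * g⁻¹⁻¹ = s i by group, inversionSign_mul,
    inversionSign_simple_self, mul_inv_cancel_right, mul_left_comm, hcancel, mul_one]

theorem mem_rightInvSeq_of_inversionSign_eq_neg_one {ω : List B} {t : W}
    (h : cs.inversionSign (π ω) t = -1) : t ∈ ris ω := by
  rw [inversionSign_wordProd] at h
  by_contra hmem
  rw [count_eq_zero_of_not_mem hmem, pow_zero] at h
  exact absurd h (by decide)

theorem isRightInversion_of_inversionSign_eq_neg_one {x t : W}
    (h : cs.inversionSign x t = -1) : cs.IsRightInversion x t := by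
  obtain ⟨ω, hω, rfl⟩ := cs.exists_isReduced x
  exact cs.isRightInversion_of_mem_rightInvSeq hω
    (cs.mem_rightInvSeq_of_inversionSign_eq_neg_one h)

theorem IsReflection.inversionSign_mul_self {t : W} (ht : cs.IsReflection t) (x : W) :
    cs.inversionSign (x * t) t = -cs.inversionSign x t := by
  rw [inversionSign_mul, ht.mul_self, one_mul, ht.inv, ht.inversionSign_self, neg_one_mul]

theorem isRightInversion_iff_inversionSign_eq_neg_one {x t : W} (ht : cs.IsReflection t) :
    cs.IsRightInversion x t ↔ cs.inversionSign x t = -1 := by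
  refine ⟨fun hx => ?_, cs.isRightInversion_of_inversionSign_eq_neg_one⟩
  by_contra hne
  have hxt : cs.IsRightInversion (x * t) t := by
    refine cs.isRightInversion_of_inversionSign_eq_neg_one ?_
    rw [ht.inversionSign_mul_self, (Int.units_eq_one_or _).resolve_right hne]
  have hlt := hxt.2
  rw [mul_assoc, ht.mul_self, mul_one] at hlt
  exact lt_asymm hx.2 hlt

end InversionSign

theorem isRightDescent_mul_of_isRightInversion {w c : W} {i : B}
    (hw : cs.IsRightInversion w (c * s i * c⁻¹)) (hc : ¬cs.IsRightDescent c i) :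
    cs.IsRightDescent (w * c) i := by
  classical
  have hs := cs.isReflection_simple i
  rw [← isRightInversion_simple_iff_isRightDescent,
    isRightInversion_iff_inversionSign_eq_neg_one _ hs] at hc ⊢
  rw [isRightInversion_iff_inversionSign_eq_neg_one _ hw.1] at hw
  rw [inversionSign_mul, hw, (Int.units_eq_one_or _).resolve_right hc, one_mul]

theorem length_mul_add_length_of_forall_length_mul_le {J : Set B} {w : W}
    (hw : ∀ a ∈ Subgroup.closure (cs.simple '' J), ℓ (w * a) ≤ ℓ w) {a : W}
    (ha : a ∈ Subgroup.closure (cs.simple '' J)) : ℓ (w * a) + ℓ a = ℓ w := by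
  have hdescent : ∀ c ∈ Subgroup.closure (cs.simple '' J), ∀ i ∈ J,
      ℓ c < ℓ (c * s i) → ℓ (w * c * s i) < ℓ (w * c) := by
    intro c hc i hi hci
    have hmem : c * s i * c⁻¹ ∈ Subgroup.closure (cs.simple '' J) :=
      mul_mem (mul_mem hc (Subgroup.subset_closure ⟨i, hi, rfl⟩)) (inv_mem hc)
    have hrefl : cs.IsReflection (c * s i * c⁻¹) := ⟨c, i, rfl⟩
    exact cs.isRightDescent_mul_of_isRightInversion
      ⟨hrefl, (hw _ hmem).lt_of_ne (hrefl.length_mul_left_ne w)⟩ (not_lt.mpr hci.le)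
  have hstep : ∀ a ∈ Subgroup.closure (cs.simple '' J), ∀ i ∈ J,
      ℓ (w * a) + ℓ a = ℓ w → ℓ (w * (a * s i)) + ℓ (a * s i) = ℓ w := by
    intro a ha i hi ih
    rw [← mul_assoc]
    -- apply `hdescent` to whichever of `a` and `a * s i` is the shorter one

    rcases cs.length_mul_simple a i with hlong | hshort
    · have := hdescent a ha i hi (by omega)
      rcases cs.length_mul_simple (w * a) i with h | h <;> omega
    · have := hdescent (a * s i) (mul_mem ha (Subgroup.subset_closure ⟨i, hi, rfl⟩)) i hi
        (by rw [simple_mul_simple_cancel_right]; omega)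
      rw [mul_assoc, simple_mul_simple_cancel_right, ← mul_assoc] at this
      rcases cs.length_mul_simple (w * a) i with h | h <;> omega
  induction ha using Subgroup.closure_induction_right with
  | one => simp
  | mul_right a ha _ hs ih =>
    obtain ⟨i, hi, rfl⟩ := hs
    exact hstep a ha i hi ih
  | mul_inv_cancel a ha _ hs ih =>
    obtain ⟨i, hi, rfl⟩ := hs
    rw [inv_simple]
    exact hstep a ha i hi ih

end CoxeterSystem

theorem stmt10_general (cs : CoxeterSystem M W) (J : Set B)
    (w : W)
    (hmax : ∀ u, (∃ x ∈ Subgroup.closure (cs.simple '' J),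
        ∃ y ∈ Subgroup.closure (cs.simple '' J), u = x * w * y) →
      cs.length u ≤ cs.length w ∧ (cs.length u = cs.length w → u = w))
    (w₁ w₂ : W)
    (hw₁ : w₁ ∈ Subgroup.closure (cs.simple '' J))
    (hw₂ : w₂ ∈ Subgroup.closure (cs.simple '' J))
    (u v : W) (hu : u = w₁ * w * w₂)
    (hlu : cs.length u + cs.length w₁ + cs.length w₂ = cs.length w)
    (hv : v = w * w₂ * w₁) :
    cs.length u ≤ cs.length v ∧
    (cs.length u = cs.length v ↔ cs.length (w₂ * w₁) = cs.length w₂ + cs.length w₁) ∧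
    ((∀ z, (∃ x ∈ Subgroup.closure (cs.simple '' J), z = x * u * x⁻¹) →
        cs.length z ≤ cs.length u) ↔
      ((∀ z, (∃ x ∈ Subgroup.closure (cs.simple '' J), z = x * u * x⁻¹) →
          cs.length z ≤ cs.length v) ∧
        cs.length (w₂ * w₁) = cs.length w₂ + cs.length w₁)) := by
  have hw : ∀ a ∈ Subgroup.closure (cs.simple '' J), cs.length (w * a) ≤ cs.length w :=
    fun a ha => (hmax (w * a) ⟨1, one_mem _, a, ha, by rw [one_mul]⟩).1
  have hlv : cs.length v + cs.length (w₂ * w₁) = cs.length w := by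
    rw [hv, mul_assoc]
    exact cs.length_mul_add_length_of_forall_length_mul_le hw (mul_mem hw₂ hw₁)
  have hsub := cs.length_mul_le w₂ w₁
  have hle : cs.length u ≤ cs.length v := by omega
  have heq : cs.length u = cs.length v ↔
      cs.length (w₂ * w₁) = cs.length w₂ + cs.length w₁ := by omega
  have hconj : v = w₁⁻¹ * u * w₁⁻¹⁻¹ := by rw [hu, hv]; group
  refine ⟨hle, heq, fun hu_max => ?_, fun ⟨hv_max, hadd⟩ z hz => ?_⟩
  · have huv := le_antisymm hle (hu_max v ⟨w₁⁻¹, inv_mem hw₁, hconj⟩)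
    exact ⟨fun z hz => (hu_max z hz).trans huv.le, heq.mp huv⟩
  · exact (hv_max z hz).trans (heq.mpr hadd).ge

/-- with `w` the unique maximal length element in `W_J w W_J`,
`u = w₁ w w₂` with `ℓ(u) = ℓ(w) − ℓ(w₁) − ℓ(w₂)` and `v = w w₂ w₁`:
`ℓ(u) ≤ ℓ(v)`, with equality iff `ℓ(w₂w₁) = ℓ(w₂) + ℓ(w₁)`; and `u` is of maximal
length in its `W_J`-conjugacy class iff `v` is of maximal length in that class and
`ℓ(w₂w₁) = ℓ(w₂) + ℓ(w₁)`. -/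
theorem stmt10 (cs : CoxeterSystem M W) (J : Set B)
    (hsph : Finite (Subgroup.closure (cs.simple '' J)))
    (w : W)
    (hmax : ∀ u, (∃ x ∈ Subgroup.closure (cs.simple '' J),
        ∃ y ∈ Subgroup.closure (cs.simple '' J), u = x * w * y) →
      cs.length u ≤ cs.length w ∧ (cs.length u = cs.length w → u = w))
    (w₁ w₂ : W)
    (hw₁ : w₁ ∈ Subgroup.closure (cs.simple '' J))
    (hw₂ : w₂ ∈ Subgroup.closure (cs.simple '' J))
    (u v : W) (hu : u = w₁ * w * w₂)
    (hlu : cs.length u + cs.length w₁ + cs.length w₂ = cs.length w)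
    (hv : v = w * w₂ * w₁) :
    cs.length u ≤ cs.length v ∧
    (cs.length u = cs.length v ↔ cs.length (w₂ * w₁) = cs.length w₂ + cs.length w₁) ∧
    ((∀ z, (∃ x ∈ Subgroup.closure (cs.simple '' J), z = x * u * x⁻¹) →
        cs.length z ≤ cs.length u) ↔
      ((∀ z, (∃ x ∈ Subgroup.closure (cs.simple '' J), z = x * u * x⁻¹) →
          cs.length z ≤ cs.length v) ∧
        cs.length (w₂ * w₁) = cs.length w₂ + cs.length w₁)) :=
  stmt10_general cs J w hmax w₁ w₂ hw₁ hw₂ u v hu hlu hv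
end

section
/- Let ℋ be the generic Hecke algebra of a Coxeter system (W,S) with invertible parameters b_s, and J ⊆ S with subalgebra ℋ_J spanned by {T_x : x ∈ W_J}. Suppose w, w' ∈ W with ℓ(w) = ℓ(w'), w' = x w x⁻¹ for some x ∈ W_J, and either ℓ(xw) = ℓ(w) − ℓ(x) or ℓ(wx⁻¹) = ℓ(w) − ℓ(x). Then T_w ≡ T_{w'} modulo the R-submodule [ℋ_J, ℋ] spanned by commutators h j − j h with j ∈ ℋ_J, h ∈ ℋ. -/
/-! If `w = uv` and `w' = vu` with `u ∈ W_J` and both products length-additive, then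
`T_w - T_{w'} = T_u T_v - T_v T_u` is a commutator with an element of `ℋ_J`. Under the
hypotheses, `u = x⁻¹, v = xw` in the first case and `u = x, v = wx⁻¹` in the second. -/

variable {B W : Type*} [Group W] {M : CoxeterMatrix B}
variable {R : Type*} [CommRing R] {H : Type*} [Ring H] [Algebra R H]

/-- The `R`-span of commutators `j*h - h*j` with `j ∈ ℋ_J` and `h ∈ ℋ`, where `ℋ_J` is
the `R`-span of `{T_x : x ∈ W_J}`. -/
def commSubmodule (cs : CoxeterSystem M W) (T : W → H) (J : Set B) : Submodule R H :=
  Submodule.span R {z | ∃ j ∈ Submodule.span R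
    (T '' ((Subgroup.closure (cs.simple '' J) : Subgroup W) : Set W)),
    ∃ h : H, z = j * h - h * j}

section

variable (cs : CoxeterSystem M W) (T : W → H) (J : Set B)

theorem mul_sub_mul_mem_commSubmodule {y : W} (hy : y ∈ Subgroup.closure (cs.simple '' J))
    (h : H) : T y * h - h * T y ∈ commSubmodule (R := R) cs T J :=
  Submodule.subset_span ⟨T y, Submodule.subset_span ⟨y, hy, rfl⟩, h, rfl⟩

variable {T}

theorem sub_mem_commSubmodule_of_length_mul
    (hmul : ∀ v w : W, cs.length (v * w) = cs.length v + cs.length w →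
      T v * T w = T (v * w))
    {u v : W} (hu : u ∈ Subgroup.closure (cs.simple '' J))
    (huv : cs.length (u * v) = cs.length u + cs.length v)
    (hvu : cs.length (v * u) = cs.length v + cs.length u) :
    T (u * v) - T (v * u) ∈ commSubmodule (R := R) cs T J := by
  rw [← hmul u v huv, ← hmul v u hvu]
  exact mul_sub_mul_mem_commSubmodule cs T J hu (T v)

end

theorem stmt15_general (cs : CoxeterSystem M W) (J : Set B)
    (T : W → H)
    (hmul : ∀ v w : W, cs.length (v * w) = cs.length v + cs.length w →
      T v * T w = T (v * w))
    (w w' x : W) (hx : x ∈ Subgroup.closure (cs.simple '' J))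
    (hlen : cs.length w = cs.length w') (hconj : w' = x * w * x⁻¹)
    (hred : cs.length (x * w) + cs.length x = cs.length w ∨
      cs.length (w * x⁻¹) + cs.length x = cs.length w) :
    T w - T w' ∈ commSubmodule (R := R) cs T J := by
  subst hconj
  rcases hred with hxw | hwx
  · have key := sub_mem_commSubmodule_of_length_mul (R := R) cs J hmul (inv_mem hx)
      (v := x * w) (by rw [inv_mul_cancel_left, cs.length_inv]; omega)
      (by rw [cs.length_inv, ← hlen]; omega)
    rwa [inv_mul_cancel_left] at key
  · have key := sub_mem_commSubmodule_of_length_mul (R := R) cs J hmul hx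
      (v := w * x⁻¹) (by rw [← mul_assoc, ← hlen]; omega)
      (by rw [inv_mul_cancel_right]; omega)
    rw [inv_mul_cancel_right, ← mul_assoc] at key
    rw [← neg_sub]
    exact neg_mem key

/-- if `ℓ(w) = ℓ(w')`, `w' = x w x⁻¹` with `x ∈ W_J` and
`ℓ(xw) = ℓ(w) − ℓ(x)` or `ℓ(wx⁻¹) = ℓ(w) − ℓ(x)`, then `T_w ≡ T_{w'} mod [ℋ_J, ℋ]`. -/
theorem stmt15 (cs : CoxeterSystem M W) (J : Set B)
    (T : W → H) (bas : Module.Basis W R H) (hbas : ∀ w, bas w = T w)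
    (a b binv : B → R) (hb : ∀ i, b i * binv i = 1)
    (hpar : ∀ i j, IsConj (cs.simple i) (cs.simple j) → a i = a j ∧ b i = b j)
    (hone : T 1 = 1)
    (hmul : ∀ v w : W, cs.length (v * w) = cs.length v + cs.length w →
      T v * T w = T (v * w))
    (hsq : ∀ i, T (cs.simple i) * T (cs.simple i)
      = a i • T (cs.simple i) + b i • (1 : H))
    (w w' x : W) (hx : x ∈ Subgroup.closure (cs.simple '' J))
    (hlen : cs.length w = cs.length w') (hconj : w' = x * w * x⁻¹)
    (hred : cs.length (x * w) + cs.length x = cs.length w ∨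
      cs.length (w * x⁻¹) + cs.length x = cs.length w) :
    T w - T w' ∈ commSubmodule (R := R) cs T J :=
  stmt15_general cs J T hmul w w' x hx hlen hconj hred
end

section
/- Let ℋ be the generic Hecke algebra of a Coxeter system (W,S), J ⊆ S, and w ∈ W, s ∈ J with ℓ(sws) > ℓ(sw) = ℓ(ws) > ℓ(w). Then T_{sws} ≡ b_s T_w + a_s T_{sw} modulo [ℋ_J, ℋ], the R-span of commutators of ℋ_J with ℋ. -/
variable {B W : Type*} [Group W] {M : CoxeterMatrix B}
variable {R : Type*} [CommRing R] {H : Type*} [Ring H] [Algebra R H]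

/-!
Since `s ∈ J`, both `[T_s, T_{ws}]` and `[T_s, T_w]` lie in `[ℋ_J, ℋ]`. The length conditions
make all products reduced except `T_{ws} T_s = a_s T_{ws} + b_s T_w`, so
`[T_s, T_{ws}] - a_s [T_s, T_w] = T_{sws} - b_s T_w - a_s T_{sw}`.
-/

theorem simple_commutator_mem_commSubmodule (cs : CoxeterSystem M W) (T : W → H) {J : Set B}
    {i : B} (hi : i ∈ J) (h : H) :
    T (cs.simple i) * h - h * T (cs.simple i) ∈ commSubmodule (R := R) cs T J := by
  have hTs : T (cs.simple i) ∈ Submodule.span R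
      (T '' ((Subgroup.closure (cs.simple '' J) : Subgroup W) : Set W)) :=
    Submodule.subset_span ⟨cs.simple i, Subgroup.subset_closure ⟨i, hi, rfl⟩, rfl⟩
  exact Submodule.subset_span ⟨T (cs.simple i), hTs, h, rfl⟩

section Hecke

variable (cs : CoxeterSystem M W) {T : W → H}
  (hmul : ∀ v w : W, cs.length (v * w) = cs.length v + cs.length w → T v * T w = T (v * w))
include hmul

theorem hecke_simple_mul_of_not_isLeftDescent {w : W} {i : B} (h : ¬cs.IsLeftDescent w i) :
    T (cs.simple i) * T w = T (cs.simple i * w) :=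
  hmul _ _ <| by rw [cs.not_isLeftDescent_iff.mp h, cs.length_simple, add_comm]

theorem hecke_mul_simple_of_not_isRightDescent {w : W} {i : B} (h : ¬cs.IsRightDescent w i) :
    T w * T (cs.simple i) = T (w * cs.simple i) :=
  hmul _ _ <| by rw [cs.not_isRightDescent_iff.mp h, cs.length_simple]

theorem hecke_mul_simple_of_isRightDescent {a b : B → R}
    (hsq : ∀ i, T (cs.simple i) * T (cs.simple i) = a i • T (cs.simple i) + b i • (1 : H))
    {w : W} {i : B} (h : cs.IsRightDescent w i) :
    T w * T (cs.simple i) = a i • T w + b i • T (w * cs.simple i) := by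
  have hws : T (w * cs.simple i) * T (cs.simple i) = T w := by
    rw [hecke_mul_simple_of_not_isRightDescent cs hmul
      (cs.isRightDescent_iff_not_isRightDescent_mul.mp h), cs.simple_mul_simple_cancel_right]
  rw [← hws, mul_assoc, hsq, mul_add, mul_smul_comm, mul_smul_comm, mul_one]

end Hecke

theorem stmt16_general (cs : CoxeterSystem M W) (J : Set B)
    (T : W → H)
    (a b : B → R)
    (hmul : ∀ v w : W, cs.length (v * w) = cs.length v + cs.length w →
      T v * T w = T (v * w))
    (hsq : ∀ i, T (cs.simple i) * T (cs.simple i)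
      = a i • T (cs.simple i) + b i • (1 : H))
    (w : W) (i : B) (hi : i ∈ J)
    (h1 : cs.length (cs.simple i * w * cs.simple i) > cs.length (cs.simple i * w))
    (h2 : cs.length (cs.simple i * w) = cs.length (w * cs.simple i))
    (h3 : cs.length (cs.simple i * w) > cs.length w) :
    T (cs.simple i * w * cs.simple i) - (b i • T w + a i • T (cs.simple i * w))
      ∈ commSubmodule (R := R) cs T J := by
  set s := cs.simple i
  have hw_left : ¬cs.IsLeftDescent w i := h3.asymm
  have hw_right : ¬cs.IsRightDescent w i := (h2 ▸ h3).asymm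
  have hws_left : ¬cs.IsLeftDescent (w * s) i := by
    rw [CoxeterSystem.IsLeftDescent, ← mul_assoc, ← h2]; exact h1.asymm
  have hws_right : cs.IsRightDescent (w * s) i := by
    rw [CoxeterSystem.IsRightDescent, cs.simple_mul_simple_cancel_right, ← h2]; exact h3
  have key : T (s * w * s) - (b i • T w + a i • T (s * w))
      = (T s * T (w * s) - T (w * s) * T s) - a i • (T s * T w - T w * T s) := by
    rw [hecke_simple_mul_of_not_isLeftDescent cs hmul hws_left,
      hecke_mul_simple_of_isRightDescent cs hmul hsq hws_right,
      hecke_simple_mul_of_not_isLeftDescent cs hmul hw_left,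
      hecke_mul_simple_of_not_isRightDescent cs hmul hw_right,
      cs.simple_mul_simple_cancel_right, mul_assoc]
    module
  rw [key]
  exact sub_mem (simple_commutator_mem_commSubmodule cs T hi _)
    (Submodule.smul_mem _ _ (simple_commutator_mem_commSubmodule cs T hi _))

/-- if `s ∈ J` and `ℓ(sws) > ℓ(sw) = ℓ(ws) > ℓ(w)`, then
`T_{sws} ≡ b_s T_w + a_s T_{sw} mod [ℋ_J, ℋ]`. -/
theorem stmt16 (cs : CoxeterSystem M W) (J : Set B)
    (T : W → H) (bas : Module.Basis W R H) (hbas : ∀ w, bas w = T w)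
    (a b : B → R)
    (hpar : ∀ i j, IsConj (cs.simple i) (cs.simple j) → a i = a j ∧ b i = b j)
    (hone : T 1 = 1)
    (hmul : ∀ v w : W, cs.length (v * w) = cs.length v + cs.length w →
      T v * T w = T (v * w))
    (hsq : ∀ i, T (cs.simple i) * T (cs.simple i)
      = a i • T (cs.simple i) + b i • (1 : H))
    (w : W) (i : B) (hi : i ∈ J)
    (h1 : cs.length (cs.simple i * w * cs.simple i) > cs.length (cs.simple i * w))
    (h2 : cs.length (cs.simple i * w) = cs.length (w * cs.simple i))
    (h3 : cs.length (cs.simple i * w) > cs.length w) :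
    T (cs.simple i * w * cs.simple i) - (b i • T w + a i • T (cs.simple i * w))
      ∈ commSubmodule (R := R) cs T J :=
  stmt16_general cs J T a b hmul hsq w i hi h1 h2 h3
end
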